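/- arXiv:0908.0232 — 9 statements merged into one kernel-verified Lean document; each statement's English description precedes it below -/
import Mathlib

section
/- Fix an integer I ≥ 2. A real polynomial q in the I² variables p_{i,j} vanishes at every matrix of the diagonal-effect toric model M1 if and only if q vanishes at every matrix of the diagonal-effect mixture model M2. (The models M1 and M2 have the same invariants.) -/
/-! Through every point of either model runs a polynomial curve whose points for parameters in
an open interval lie in the other model. An invariant of the other model therefore vanishes at
infinitely many parameters of the curve, hence identically along it, in particular at the given
point.

From `P ∈ M2` with parameters `(α, r, c, d)`, move `α` towards `1` and `r, c` towards the
uniform vector: once `α > 0` and `r, c > 0`, the matrix lies in `M1` with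
`ζᵞ i = p i i / (α r i c i)`.
From `P ∈ M1`, whose off-diagonal part is `a r cᵀ` for probability vectors `r, c`, mix with
weight `t` towards the uniform diagonal matrix: for `t` close to `1` the diagonal entries exceed
`(1 - t) a r i c i`, and the excess is `(1 - (1 - t) a) d i` for a probability vector `d`. -/

/-- The diagonal-effect toric model `M1`: `I × I` nonnegative matrices summing to `1`
with `p i j = ζʳ i * ζᶜ j` off the diagonal and `p i i = ζʳ i * ζᶜ i * ζᵞ i`
for some nonnegative vectors `ζʳ, ζᶜ, ζᵞ`. -/
def inM1 {I : ℕ} (P : Matrix (Fin I) (Fin I) ℝ) : Prop :=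
  (∀ i j, 0 ≤ P i j) ∧ (∑ i, ∑ j, P i j = 1) ∧
  ∃ zr zc zg : Fin I → ℝ,
    (∀ i, 0 ≤ zr i) ∧ (∀ i, 0 ≤ zc i) ∧ (∀ i, 0 ≤ zg i) ∧
    (∀ i j, i ≠ j → P i j = zr i * zc j) ∧
    (∀ i, P i i = zr i * zc i * zg i)

/-- The diagonal-effect mixture model `M2`: matrices of the form
`α • (r cᵗ entrywise) + (1-α) • diag d` with `r, c, d` nonnegative vectors summing
to `1` and `α ∈ [0,1]`. -/
def inM2 {I : ℕ} (P : Matrix (Fin I) (Fin I) ℝ) : Prop :=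
  ∃ (α : ℝ) (r c d : Fin I → ℝ),
    0 ≤ α ∧ α ≤ 1 ∧
    (∀ i, 0 ≤ r i) ∧ (∀ i, 0 ≤ c i) ∧ (∀ i, 0 ≤ d i) ∧
    (∑ i, r i = 1) ∧ (∑ i, c i = 1) ∧ (∑ i, d i = 1) ∧
    (∀ i j, i ≠ j → P i j = α * r i * c j) ∧
    (∀ i, P i i = α * r i * c i + (1 - α) * d i)

open Polynomial

section PolynomialCurves

variable {R σ : Type*} [CommRing R]

theorem MvPolynomial.polynomial_eval_aeval (q : MvPolynomial σ R) (γ : σ → R[X]) (t : R) :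
    (MvPolynomial.aeval γ q).eval t = MvPolynomial.eval (fun x => (γ x).eval t) q := by
  rw [← Polynomial.coe_aeval_eq_eval, MvPolynomial.comp_aeval_apply]
  rfl

theorem MvPolynomial.eval_curve_eq_zero_of_infinite [IsDomain R] (q : MvPolynomial σ R)
    (γ : σ → R[X]) {s : Set R} (hs : s.Infinite)
    (h : ∀ t ∈ s, MvPolynomial.eval (fun x => (γ x).eval t) q = 0) (t₀ : R) :
    MvPolynomial.eval (fun x => (γ x).eval t₀) q = 0 := by
  have hzero : MvPolynomial.aeval γ q = 0 :=
    eq_zero_of_infinite_isRoot _ <| hs.mono fun t ht => by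
      simp only [Set.mem_ofPred_eq, IsRoot, MvPolynomial.polynomial_eval_aeval, h t ht]
  rw [← MvPolynomial.polynomial_eval_aeval, hzero, Polynomial.eval_zero]

noncomputable def lineMapPoly (a b : R) : R[X] := C a + X * C (b - a)

theorem eval_lineMapPoly (a b t : R) : (lineMapPoly a b).eval t = AffineMap.lineMap a b t := by
  simp [lineMapPoly, AffineMap.lineMap_apply_ring']
  ring

theorem MvPolynomial.eval_eq_zero_of_infinite_lineMap [IsDomain R] (q : MvPolynomial σ R)
    (a b : σ → R) {s : Set R} (hs : s.Infinite)
    (h : ∀ t ∈ s, MvPolynomial.eval (AffineMap.lineMap a b t) q = 0) :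
    MvPolynomial.eval a q = 0 := by
  have hγ : ∀ t, (fun x => (lineMapPoly (a x) (b x)).eval t) = AffineMap.lineMap a b t :=
    fun t => by ext x; rw [eval_lineMapPoly, AffineMap.pi_lineMap_apply]
  have h0 := eval_curve_eq_zero_of_infinite q _ hs (fun t ht => (hγ t).symm ▸ h t ht) 0
  rwa [hγ, AffineMap.lineMap_apply_zero] at h0

end PolynomialCurves

section OrderedField

variable {k ι : Type*} [Field k] [LinearOrder k] [IsStrictOrderedRing k] [Fintype ι]

theorem lineMap_pos {a b t : k} (ha : 0 ≤ a) (hb : 0 < b) (ht : t ∈ Set.Ioc 0 1) :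
    0 < AffineMap.lineMap a b t := by
  rw [AffineMap.lineMap_apply_ring]
  exact add_pos_of_nonneg_of_pos (mul_nonneg (sub_nonneg.2 ht.2) ha) (mul_pos ht.1 hb)

theorem nonempty_of_sum_eq_one {x : ι → k} (h : ∑ i, x i = 1) : Nonempty ι := by
  by_contra hι
  simp [not_nonempty_iff.1 hι] at h

theorem exists_mem_stdSimplex_eq_sum_smul [Nonempty ι] {x : ι → k} (hx : ∀ i, 0 ≤ x i) :
    ∃ r ∈ stdSimplex k ι, x = (∑ i, x i) • r := by
  by_cases h : ∑ i, x i = 0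
  · have hx0 := (Finset.sum_eq_zero_iff_of_nonneg fun i _ => hx i).1 h
    exact ⟨_, (stdSimplex.barycenter : stdSimplex k ι).prop, by ext i; simp [h, hx0 i]⟩
  · refine ⟨(∑ i, x i)⁻¹ • x, ⟨fun i => ?_, ?_⟩, ?_⟩
    · exact smul_nonneg (inv_nonneg.2 (Finset.sum_nonneg fun i _ => hx i)) (hx i)
    · simp [← Finset.mul_sum, h]
    · simp [smul_smul, h]

end OrderedField

theorem Matrix.sum_sum_eq_of_offDiag_eq {n α : Type*} [Fintype n] [DecidableEq n]
    [AddCommGroup α] {P M : Matrix n n α} (h : ∀ i j, i ≠ j → P i j = M i j) :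
    ∑ i, ∑ j, P i j = ∑ i, ∑ j, M i j + ∑ i, (P i i - M i i) := by
  have hP : P = M + Matrix.diagonal fun i => P i i - M i i := by
    ext i j
    by_cases hij : i = j
    · subst hij; simp
    · simp [h i j hij, hij]
  conv_lhs => rw [hP]
  simp [Finset.sum_add_distrib, Matrix.diagonal_apply]

section Mixture

variable {n R S : Type*} [DecidableEq n] [CommRing R] [CommRing S]

def mixtureMatrix (α : R) (r c d : n → R) : Matrix n n R :=
  α • Matrix.vecMulVec r c + (1 - α) • Matrix.diagonal d

theorem mixtureMatrix_apply (α : R) (r c d : n → R) (i j : n) :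
    mixtureMatrix α r c d i j = α * r i * c j + if i = j then (1 - α) * d i else 0 := by
  by_cases h : i = j
  · subst h; simp [mixtureMatrix, Matrix.vecMulVec_apply, mul_assoc]
  · simp [mixtureMatrix, Matrix.vecMulVec_apply, h, mul_assoc]

theorem mixtureMatrix_map (f : R →+* S) (α : R) (r c d : n → R) :
    (mixtureMatrix α r c d).map f = mixtureMatrix (f α) (f ∘ r) (f ∘ c) (f ∘ d) := by
  ext i j
  simp only [Matrix.map_apply, mixtureMatrix_apply]
  split_ifs <;> simp

theorem map_eval_mixtureMatrix_lineMapPoly (α α' : R) (r r' c c' d : n → R) (t : R) :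
    (mixtureMatrix (lineMapPoly α α') (fun i => lineMapPoly (r i) (r' i))
        (fun i => lineMapPoly (c i) (c' i)) (fun i => C (d i))).map (Polynomial.eval t) =
      mixtureMatrix (AffineMap.lineMap α α' t) (AffineMap.lineMap r r' t)
        (AffineMap.lineMap c c' t) d := by
  rw [show Polynomial.eval t = ⇑(evalRingHom t) from rfl, mixtureMatrix_map]
  congr 1
  · exact eval_lineMapPoly α α' t
  all_goals ext i; simp [eval_lineMapPoly, AffineMap.pi_lineMap_apply]

end Mixture

section Models

variable {I : ℕ}

theorem inM2.exists_eq_mixtureMatrix {P : Matrix (Fin I) (Fin I) ℝ} (hP : inM2 P) :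
    ∃ α ∈ Set.Icc (0 : ℝ) 1, ∃ r ∈ stdSimplex ℝ (Fin I), ∃ c ∈ stdSimplex ℝ (Fin I),
      ∃ d ∈ stdSimplex ℝ (Fin I), P = mixtureMatrix α r c d := by
  obtain ⟨α, r, c, d, hα0, hα1, hr, hc, hd, hrs, hcs, hds, hoff, hdiag⟩ := hP
  refine ⟨α, ⟨hα0, hα1⟩, r, ⟨hr, hrs⟩, c, ⟨hc, hcs⟩, d, ⟨hd, hds⟩, ?_⟩
  ext i j
  rw [mixtureMatrix_apply]
  by_cases h : i = j
  · subst h; simp [hdiag]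
  · simp [hoff i j h, h]

theorem inM1_mixtureMatrix {α : ℝ} {r c d : Fin I → ℝ} (hα : α ∈ Set.Ioc 0 1)
    (hr : r ∈ stdSimplex ℝ (Fin I)) (hc : c ∈ stdSimplex ℝ (Fin I))
    (hd : d ∈ stdSimplex ℝ (Fin I)) (hr0 : ∀ i, 0 < r i) (hc0 : ∀ i, 0 < c i) :
    inM1 (mixtureMatrix α r c d) := by
  have hrc : ∀ i, 0 < α * r i * c i := fun i => mul_pos (mul_pos hα.1 (hr0 i)) (hc0 i)
  have hnonneg : ∀ i j, 0 ≤ mixtureMatrix α r c d i j := fun i j => by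
    rw [mixtureMatrix_apply]
    refine add_nonneg (mul_nonneg (mul_nonneg hα.1.le (hr.1 i)) (hc.1 j)) ?_
    split_ifs
    exacts [mul_nonneg (sub_nonneg.2 hα.2) (hd.1 i), le_rfl]
  refine ⟨hnonneg, ?_, fun i => α * r i, c,
    fun i => mixtureMatrix α r c d i i / (α * r i * c i),
    fun i => (mul_pos hα.1 (hr0 i)).le, fun i => (hc0 i).le,
    fun i => div_nonneg (hnonneg i i) (hrc i).le, fun i j hij => ?_,
    fun i => (mul_div_cancel₀ _ (hrc i).ne').symm⟩
  · simp [mixtureMatrix_apply, Finset.sum_add_distrib, ← Finset.mul_sum, hr.2, hc.2, hd.2]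
  · rw [mixtureMatrix_apply, if_neg hij, add_zero]

theorem inM1_mixtureMatrix_lineMap {α : ℝ} {r c d u : Fin I → ℝ} (hα : α ∈ Set.Icc 0 1)
    (hr : r ∈ stdSimplex ℝ (Fin I)) (hc : c ∈ stdSimplex ℝ (Fin I))
    (hd : d ∈ stdSimplex ℝ (Fin I)) (hu : u ∈ stdSimplex ℝ (Fin I)) (hu0 : ∀ i, 0 < u i)
    {t : ℝ} (ht : t ∈ Set.Ioc 0 1) :
    inM1 (mixtureMatrix (AffineMap.lineMap α 1 t) (AffineMap.lineMap r u t)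
      (AffineMap.lineMap c u t) d) := by
  have ht' : t ∈ Set.Icc 0 1 := Set.Ioc_subset_Icc_self ht
  refine inM1_mixtureMatrix ⟨lineMap_pos hα.1 one_pos ht, ?_⟩
    ((convex_stdSimplex ℝ _).lineMap_mem hr hu ht')
    ((convex_stdSimplex ℝ _).lineMap_mem hc hu ht') hd (fun i => ?_) (fun i => ?_)
  · exact ((convex_Icc 0 1).lineMap_mem hα ⟨zero_le_one, le_rfl⟩ ht').2
  · exact AffineMap.pi_lineMap_apply r u t i ▸ lineMap_pos (hr.1 i) (hu0 i) ht
  · exact AffineMap.pi_lineMap_apply c u t i ▸ lineMap_pos (hc.1 i) (hu0 i) ht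

theorem inM2_of_offDiag_eq {P : Matrix (Fin I) (Fin I) ℝ} {α : ℝ} {r c : Fin I → ℝ}
    (hα : α ∈ Set.Ico 0 1) (hr : r ∈ stdSimplex ℝ (Fin I)) (hc : c ∈ stdSimplex ℝ (Fin I))
    (hsum : ∑ i, ∑ j, P i j = 1) (hoff : ∀ i j, i ≠ j → P i j = α * r i * c j)
    (hdiag : ∀ i, α * r i * c i ≤ P i i) : inM2 P := by
  have hα1 : 0 < 1 - α := sub_pos.2 hα.2
  have htrace : ∑ i, (P i i - α * r i * c i) = 1 - α := by
    have := Matrix.sum_sum_eq_of_offDiag_eq (M := Matrix.of fun i j => α * r i * c j) hoff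
    simp [mul_assoc, ← Finset.mul_sum, hr.2, hc.2, hsum] at this
    simp only [Finset.sum_sub_distrib, mul_assoc, ← Finset.mul_sum]
    linarith
  refine ⟨α, r, c, fun i => (P i i - α * r i * c i) / (1 - α), hα.1, hα.2.le, hr.1, hc.1,
    fun i => div_nonneg (sub_nonneg.2 (hdiag i)) hα1.le, hr.2, hc.2, ?_, hoff, fun i => ?_⟩
  · rw [← Finset.sum_div, htrace, div_self hα1.ne']
  · rw [mul_div_cancel₀ _ hα1.ne']
    ring

theorem inM1.exists_offDiag_eq {P : Matrix (Fin I) (Fin I) ℝ} (hP : inM1 P) :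
    ∃ a, 0 ≤ a ∧ ∃ r ∈ stdSimplex ℝ (Fin I), ∃ c ∈ stdSimplex ℝ (Fin I),
      ∀ i j, i ≠ j → P i j = a * r i * c j := by
  obtain ⟨-, hsum, zr, zc, -, hzr, hzc, -, hoff, -⟩ := hP
  have := nonempty_of_sum_eq_one hsum
  obtain ⟨r, hr, hzr_eq⟩ := exists_mem_stdSimplex_eq_sum_smul hzr
  obtain ⟨c, hc, hzc_eq⟩ := exists_mem_stdSimplex_eq_sum_smul hzc
  refine ⟨(∑ i, zr i) * ∑ i, zc i,
    mul_nonneg (Finset.sum_nonneg fun i _ => hzr i) (Finset.sum_nonneg fun i _ => hzc i),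
    r, hr, c, hc, fun i j hij => ?_⟩
  rw [hoff i j hij, congrFun hzr_eq i, congrFun hzc_eq j, Pi.smul_apply, Pi.smul_apply,
    smul_eq_mul, smul_eq_mul]
  ring

theorem inM2_smul_add_smul_diagonal {P : Matrix (Fin I) (Fin I) ℝ} (hP : inM1 P)
    {a : ℝ} {r c : Fin I → ℝ} (ha : 0 ≤ a) (hr : r ∈ stdSimplex ℝ (Fin I))
    (hc : c ∈ stdSimplex ℝ (Fin I)) (hoff : ∀ i j, i ≠ j → P i j = a * r i * c j)
    {t : ℝ} (ht : t < 1) (hta : (1 - t) * a * I ≤ t) :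
    inM2 ((1 - t) • P + t • Matrix.diagonal fun _ => (I : ℝ)⁻¹) := by
  have hI : (1 : ℝ) ≤ I :=
    Nat.one_le_cast.2 (Fin.pos_iff_nonempty.2 (nonempty_of_sum_eq_one hr.2))
  have h1t : 0 ≤ 1 - t := by linarith
  have hα : (1 - t) * a ≤ t * (I : ℝ)⁻¹ := by
    rwa [← div_eq_mul_inv, le_div_iff₀ (by positivity)]
  refine inM2_of_offDiag_eq (α := (1 - t) * a) ⟨mul_nonneg h1t ha, ?_⟩ hr hc ?_
    (fun i j hij => ?_) (fun i => ?_)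
  · calc (1 - t) * a ≤ t * (I : ℝ)⁻¹ := hα
      _ ≤ t :=
        mul_le_of_le_one_right (le_trans (by positivity) hta) (inv_le_one_of_one_le₀ hI)
      _ < 1 := ht
  · simp [Finset.sum_add_distrib, ← Finset.mul_sum, hP.2.1, Matrix.diagonal_apply]
    field_simp
    ring
  · simp [hij, hoff i j hij]
    ring
  · have hrc : r i * c i ≤ 1 := mul_le_one₀ (mem_Icc_of_mem_stdSimplex hr i).2 (hc.1 i)
      (mem_Icc_of_mem_stdSimplex hc i).2
    simp only [Matrix.add_apply, Matrix.smul_apply, Matrix.diagonal_apply_eq, smul_eq_mul]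
    nlinarith [mul_nonneg (mul_nonneg h1t ha) (sub_nonneg.2 hrc), mul_nonneg h1t (hP.1 i i)]

theorem eval_eq_zero_of_inM2 {q : MvPolynomial (Fin I × Fin I) ℝ}
    (hq : ∀ P : Matrix (Fin I) (Fin I) ℝ, inM1 P →
      MvPolynomial.eval (fun x => P x.1 x.2) q = 0)
    {P : Matrix (Fin I) (Fin I) ℝ} (hP : inM2 P) :
    MvPolynomial.eval (fun x => P x.1 x.2) q = 0 := by
  obtain ⟨α, hα, r, hr, c, hc, d, hd, rfl⟩ := hP.exists_eq_mixtureMatrix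
  have := nonempty_of_sum_eq_one hr.2
  let u : stdSimplex ℝ (Fin I) := stdSimplex.barycenter
  have hu0 : ∀ i, 0 < u.1 i := fun i => inv_pos.2 (Nat.cast_pos.2 Fintype.card_pos)
  let Γ : Matrix (Fin I) (Fin I) ℝ[X] := mixtureMatrix (lineMapPoly α 1)
    (fun i => lineMapPoly (r i) (u.1 i)) (fun i => lineMapPoly (c i) (u.1 i)) (fun i => C (d i))
  have hΓ : ∀ t, Γ.map (Polynomial.eval t) = mixtureMatrix (AffineMap.lineMap α 1 t)
      (AffineMap.lineMap r u.1 t) (AffineMap.lineMap c u.1 t) d :=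
    map_eval_mixtureMatrix_lineMapPoly _ _ _ _ _ _ _
  have h0 := MvPolynomial.eval_curve_eq_zero_of_infinite q (fun x => Γ x.1 x.2)
    (Set.Ioo_infinite zero_lt_one) (fun t ht => ?_) 0
  · change MvPolynomial.eval (fun x => Γ.map (Polynomial.eval 0) x.1 x.2) q = 0 at h0
    simpa only [hΓ, AffineMap.lineMap_apply_zero] using h0
  change MvPolynomial.eval (fun x => Γ.map (Polynomial.eval t) x.1 x.2) q = 0
  rw [hΓ]
  exact hq _ (inM1_mixtureMatrix_lineMap hα hr hc hd u.2 hu0 (Set.Ioo_subset_Ioc_self ht))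

theorem eval_eq_zero_of_inM1 {q : MvPolynomial (Fin I × Fin I) ℝ}
    (hq : ∀ P : Matrix (Fin I) (Fin I) ℝ, inM2 P →
      MvPolynomial.eval (fun x => P x.1 x.2) q = 0)
    {P : Matrix (Fin I) (Fin I) ℝ} (hP : inM1 P) :
    MvPolynomial.eval (fun x => P x.1 x.2) q = 0 := by
  obtain ⟨a, ha, r, hr, c, hc, hoff⟩ := hP.exists_offDiag_eq
  set D : Matrix (Fin I) (Fin I) ℝ := Matrix.diagonal fun _ => (I : ℝ)⁻¹
  have hk : 0 < a * I + 1 := by positivity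
  refine MvPolynomial.eval_eq_zero_of_infinite_lineMap q _ (fun x => D x.1 x.2)
    (Set.Ioo_infinite ((div_lt_one hk).2 (lt_add_one (a * I)))) fun t ht => ?_
  have hline : AffineMap.lineMap (fun x : Fin I × Fin I => P x.1 x.2) (fun x => D x.1 x.2) t =
      fun x : Fin I × Fin I => ((1 - t) • P + t • D) x.1 x.2 := by
    ext x
    simp [AffineMap.lineMap_apply_module]
  rw [hline]
  refine hq _ (inM2_smul_add_smul_diagonal hP ha hr hc hoff ht.2 ?_)
  nlinarith [(div_lt_iff₀ hk).1 ht.1]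

end Models

theorem M1_M2_same_invariants_general {I : ℕ}
    (q : MvPolynomial (Fin I × Fin I) ℝ) :
    (∀ P : Matrix (Fin I) (Fin I) ℝ, inM1 P →
        MvPolynomial.eval (fun x => P x.1 x.2) q = 0) ↔
    (∀ P : Matrix (Fin I) (Fin I) ℝ, inM2 P →
        MvPolynomial.eval (fun x => P x.1 x.2) q = 0) :=
  ⟨fun hq _ => eval_eq_zero_of_inM2 hq, fun hq _ => eval_eq_zero_of_inM1 hq⟩

/-- The models `M1` and `M2` have the same invariants: a polynomial in the entries
`p i j` vanishes on all of `M1` iff it vanishes on all of `M2`. -/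
theorem M1_M2_same_invariants {I : ℕ} (hI : 2 ≤ I)
    (q : MvPolynomial (Fin I × Fin I) ℝ) :
    (∀ P : Matrix (Fin I) (Fin I) ℝ, inM1 P →
        MvPolynomial.eval (fun x => P x.1 x.2) q = 0) ↔
    (∀ P : Matrix (Fin I) (Fin I) ℝ, inM2 P →
        MvPolynomial.eval (fun x => P x.1 x.2) q = 0) :=
  M1_M2_same_invariants_general q
end

section
/- Let I ≥ 2 and let P = (p_{i,j}) be the I×I matrix with p_{i,i} = 0 for all i and p_{i,j} = 1/(I(I−1)) for all i ≠ j. Then P belongs to the diagonal-effect toric model M1 but P does not belong to the diagonal-effect mixture model M2. -/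
/-!
Off the diagonal, `M2` has `p i j * p j i = (α r_i c_i) * (α r_j c_j)`, and `α r_i c_i ≤ p i i`.
So two positive entries `p i j`, `p j i` force `p i i > 0`: no matrix of `M2` with positive
off-diagonal part has a zero diagonal. In `M1`, on the other hand, `ζᵞ = 0` kills the diagonal
while `ζʳ = 1/I`, `ζᶜ = 1/(I-1)` produce the constant off-diagonal entries.
-/

theorem sum_sum_ite_eq_zero_else_const {ι : Type*} [Fintype ι] [DecidableEq ι] (a : ℝ) :
    ∑ i : ι, ∑ j : ι, (if i = j then 0 else a) =
      Fintype.card ι * (Fintype.card ι - 1) * a := by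
  rcases (Fintype.card ι).eq_zero_or_pos with h | h <;>
    simp [Finset.sum_ite, Finset.filter_ne, h, Nat.cast_pred, mul_assoc]

theorem inM2.pos_diag_of_pos_of_pos {I : ℕ} {P : Matrix (Fin I) (Fin I) ℝ} (hP : inM2 P)
    {i j : Fin I} (hij : i ≠ j) (hPij : 0 < P i j) (hPji : 0 < P j i) : 0 < P i i := by
  obtain ⟨α, r, c, d, hα0, hα1, hr, hc, hd, -, -, -, hoff, hdiag⟩ := hP
  have hprod : 0 < (α * r i * c i) * (α * r j * c j) := by
    calc 0 < P i j * P j i := mul_pos hPij hPji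
      _ = (α * r i * c i) * (α * r j * c j) := by rw [hoff i j hij, hoff j i hij.symm]; ring
  have hαri : 0 < α * r i * c i :=
    pos_of_mul_pos_left hprod (mul_nonneg (mul_nonneg hα0 (hr j)) (hc j))
  calc 0 < α * r i * c i := hαri
    _ ≤ α * r i * c i + (1 - α) * d i := le_add_of_nonneg_right (mul_nonneg (by linarith) (hd i))
    _ = P i i := (hdiag i).symm

/-- The matrix with zero diagonal and constant off-diagonal entries `1/(I(I-1))`
belongs to `M1` but not to `M2`. -/
theorem zero_diagonal_in_M1_not_M2 {I : ℕ} (hI : 2 ≤ I)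
    (P : Matrix (Fin I) (Fin I) ℝ)
    (hP : ∀ i j, P i j = if i = j then 0 else 1 / (I * (I - 1) : ℝ)) :
    inM1 P ∧ ¬ inM2 P := by
  have hI1 : (0 : ℝ) < I - 1 := by
    have : (2 : ℝ) ≤ I := by exact_mod_cast hI
    linarith
  have hpos : (0 : ℝ) < 1 / (I * (I - 1)) := by positivity
  have hP_nonneg : ∀ i j, 0 ≤ P i j := fun i j => by
    rw [hP]; split_ifs <;> [rfl; exact hpos.le]
  constructor
  · refine ⟨hP_nonneg, ?_, fun _ => 1 / I, fun _ => 1 / (I - 1), fun _ => 0,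
      fun _ => by positivity, fun _ => by positivity, fun _ => le_rfl, ?_, ?_⟩
    · simp only [hP, sum_sum_ite_eq_zero_else_const, Fintype.card_fin]
      field_simp [hI1.ne']
    · intro i j hij
      rw [hP, if_neg hij, div_mul_div_comm, one_mul]
    · intro i
      rw [hP, if_pos rfl, mul_zero]
  · intro hM2
    have : Nontrivial (Fin I) := Fin.nontrivial_iff_two_le.mpr hI
    obtain ⟨i, j, hij⟩ := exists_pair_ne (Fin I)
    have hii := hM2.pos_diag_of_pos_of_pos hij (by rwa [hP, if_neg hij])
      (by rwa [hP, if_neg hij.symm])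
    simp [hP] at hii
end

section
/- Let I ≥ 2 and let P be the I×I diagonal matrix with all diagonal entries equal to 1/I. Then P belongs to the diagonal-effect mixture model M2 but P does not belong to the diagonal-effect toric model M1. -/
/-- The diagonal matrix with all diagonal entries `1/I` belongs to `M2`
but not to `M1`. -/
theorem uniform_diagonal_in_M2_not_M1 {I : ℕ} (hI : 2 ≤ I)
    (P : Matrix (Fin I) (Fin I) ℝ)
    (hP : ∀ i j, P i j = if i = j then (1 / I : ℝ) else 0) :
    inM2 P ∧ ¬ inM1 P := by
  have hIpos : (0:ℝ) < I := by
    have : 0 < I := lt_of_lt_of_le (by norm_num) hI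
    exact_mod_cast this
  have hsum : (∑ _i : Fin I, (1 / I : ℝ)) = 1 := by
    simp [Finset.sum_const, Finset.card_fin]
    field_simp
  constructor
  · refine ⟨0, fun _ => 1 / I, fun _ => 1 / I, fun _ => 1 / I, le_refl 0, by norm_num,
      fun i => by positivity, fun i => by positivity, fun i => by positivity,
      hsum, hsum, hsum, ?_, ?_⟩
    · intro i j hij
      simp [hP i j, hij]
    · intro i
      simp [hP i i]
  · rintro ⟨-, -, zr, zc, zg, -, -, -, hoff, hdiag⟩
    set i0 : Fin I := ⟨0, by omega⟩ with hi0
    set i1 : Fin I := ⟨1, by omega⟩ with hi1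
    have hne : i0 ≠ i1 := by
      simp [hi0, hi1, Fin.ext_iff]
    have hd : ∀ i : Fin I, zr i ≠ 0 ∧ zc i ≠ 0 := by
      intro i
      have h1 : P i i = 1 / I := by simp [hP i i]
      have h2 := hdiag i
      rw [h1] at h2
      have hne0 : (1 / I : ℝ) ≠ 0 := by positivity
      constructor <;> intro h <;> rw [h] at h2 <;> simp at h2 <;> omega
    have h0 : P i0 i1 = 0 := by simp [hP i0 i1, hne]
    have := hoff i0 i1 hne
    rw [h0] at this
    rcases mul_eq_zero.mp this.symm with h | h
    · exact (hd i0).1 h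
    · exact (hd i1).2 h
end

section
/- Let P = (p_{i,j}) be an I×I matrix with all entries strictly positive which belongs to the diagonal-effect mixture model M2. Then P belongs to the diagonal-effect toric model M1. That is, in the open probability simplex, M2 ⊆ M1. -/
/-! When `I ≥ 2`, every row and every column has an off-diagonal entry, so positivity of
`P i j = (α r i) c j` forces `α r` and `c` to be positive; the diagonal factor
`ζᵞ i = P i i / (α r i c i)` then absorbs the mixture term. When `I ≤ 1` there is no
off-diagonal constraint and `ζʳ = ζᶜ = 1` works. -/

theorem inM2.sum_sum_eq_one {I : ℕ} {P : Matrix (Fin I) (Fin I) ℝ} (hP : inM2 P) :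
    ∑ i, ∑ j, P i j = 1 := by
  obtain ⟨α, r, c, d, -, -, -, -, -, hrs, hcs, hds, hoff, hdiag⟩ := hP
  have hrow : ∀ i, ∑ j, P i j = α * r i + (1 - α) * d i := fun i => by
    calc ∑ j, P i j = ∑ j, (α * r i * c j + if i = j then (1 - α) * d i else 0) := by
          refine Finset.sum_congr rfl fun j _ => ?_
          by_cases h : i = j
          · subst h; simp [hdiag]
          · simp [hoff i j h, h]
      _ = α * r i + (1 - α) * d i := by
          simp [Finset.sum_add_distrib, ← Finset.mul_sum, hcs]
  simp only [hrow, Finset.sum_add_distrib, ← Finset.mul_sum, hrs, hds]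
  ring

theorem pos_of_mul_pos_of_ne {ι : Type*} [Nontrivial ι] {f g : ι → ℝ}
    (hf : ∀ i, 0 ≤ f i) (hg : ∀ j, 0 ≤ g j) (hfg : ∀ i j, i ≠ j → 0 < f i * g j) :
    (∀ i, 0 < f i) ∧ ∀ j, 0 < g j := by
  constructor
  · intro i
    obtain ⟨j, hij⟩ := exists_ne i
    exact pos_of_mul_pos_left (hfg i j hij.symm) (hg j)
  · intro j
    obtain ⟨i, hij⟩ := exists_ne j
    exact pos_of_mul_pos_right (hfg i j hij) (hf i)

theorem inM1_of_offDiag_eq_mul {I : ℕ} {P : Matrix (Fin I) (Fin I) ℝ}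
    (hnonneg : ∀ i j, 0 ≤ P i j) (hsum : ∑ i, ∑ j, P i j = 1) {a b : Fin I → ℝ} (ha : ∀ i, 0 < a i) (hb : ∀ i, 0 < b i)
    (hoff : ∀ i j, i ≠ j → P i j = a i * b j) : inM1 P :=
  ⟨hnonneg, hsum, a, b, fun i => P i i / (a i * b i), fun i => (ha i).le,
    fun i => (hb i).le, fun i => div_nonneg (hnonneg i i) (mul_pos (ha i) (hb i)).le, hoff,
    fun i => (mul_div_cancel₀ _ (mul_pos (ha i) (hb i)).ne').symm⟩

/-- In the open probability simplex, `M2 ⊆ M1`: a strictly positive matrix of the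
diagonal-effect mixture model also belongs to the diagonal-effect toric model. -/
theorem M2_subset_M1_of_pos {I : ℕ} (P : Matrix (Fin I) (Fin I) ℝ)
    (hpos : ∀ i j, 0 < P i j) (hP : inM2 P) : inM1 P := by
  have hnonneg : ∀ i j, 0 ≤ P i j := fun i j => (hpos i j).le
  obtain ⟨α, r, c, d, hα, -, hr, hc, -, -, -, -, hoff, -⟩ := id hP
  rcases subsingleton_or_nontrivial (Fin I) with hI | hI
  · exact inM1_of_offDiag_eq_mul (a := 1) (b := 1) hnonneg hP.sum_sum_eq_one
      (fun _ => one_pos) (fun _ => one_pos) fun i j h => absurd (Subsingleton.elim i j) h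
  · obtain ⟨hαr, hcpos⟩ := pos_of_mul_pos_of_ne (fun i => mul_nonneg hα (hr i)) hc
      fun i j h => hoff i j h ▸ hpos i j
    exact inM1_of_offDiag_eq_mul hnonneg hP.sum_sum_eq_one hαr hcpos hoff
end

section
/- Let I ≥ 3, let ζʳ, ζᶜ ∈ ℝ^I be strictly positive vectors and let N_T > 0 be a real number. Suppose α ∈ (0,1] and r, c ∈ ℝ^I are nonnegative vectors with Σ_i r_i = Σ_j c_j = 1 satisfying α r_i c_j = ζʳ_i ζᶜ_j / N_T for all i ≠ j. Then necessarily r_i = ζʳ_i / (Σ_k ζʳ_k) for all i, c_j = ζᶜ_j / (Σ_k ζᶜ_k) for all j, and α = N / N_T, where N = Σ_{i,j} ζʳ_i ζᶜ_j = (Σ_k ζʳ_k)(Σ_k ζᶜ_k). (The off-diagonal equations of the mixture representation have a unique solution.) -/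
/-- The off-diagonal equations of the mixture representation have a unique solution:
if `α * r i * c j = ζʳ i * ζᶜ j / N_T` for all `i ≠ j`, with `r, c` nonnegative
summing to one and `α ∈ (0,1]`, then `r`, `c` and `α` are as in the normalization
of the toric parameters. -/
theorem mixture_offdiagonal_unique_solution {I : ℕ} (hI : 3 ≤ I)
    (zr zc : Fin I → ℝ) (hzr : ∀ i, 0 < zr i) (hzc : ∀ i, 0 < zc i)
    (NT : ℝ) (hNT : 0 < NT)
    (α : ℝ) (hα0 : 0 < α) (hα1 : α ≤ 1)
    (r c : Fin I → ℝ) (hr : ∀ i, 0 ≤ r i) (hc : ∀ i, 0 ≤ c i)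
    (hrs : ∑ i, r i = 1) (hcs : ∑ j, c j = 1)
    (heq : ∀ i j, i ≠ j → α * r i * c j = zr i * zc j / NT) :
    (∀ i, r i = zr i / ∑ k, zr k) ∧
    (∀ j, c j = zc j / ∑ k, zc k) ∧
    α = (∑ i, ∑ j, zr i * zc j) / NT := by
  haveI : Nontrivial (Fin I) := Fin.nontrivial_iff_two_le.mpr (by omega)
  -- positivity of r and c
  have hrpos : ∀ i, 0 < r i := by
    intro i
    obtain ⟨j, hj⟩ := exists_ne i
    have h := heq i j (Ne.symm hj)
    have hp : 0 < α * r i * c j := by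
      rw [h]; exact div_pos (mul_pos (hzr i) (hzc j)) hNT
    rcases (hr i).eq_or_lt with h0 | h0
    · exfalso; rw [← h0] at hp; simp at hp
    · exact h0
  have hcpos : ∀ j, 0 < c j := by
    intro j
    obtain ⟨i, hij⟩ := exists_ne j
    have h := heq i j hij
    have hp : 0 < α * r i * c j := by
      rw [h]; exact div_pos (mul_pos (hzr i) (hzc j)) hNT
    rcases (hc j).eq_or_lt with h0 | h0
    · exfalso; rw [← h0] at hp; simp at hp
    · exact h0
  -- a third index distinct from any two given indices
  have third : ∀ a b : Fin I, ∃ j, j ≠ a ∧ j ≠ b := by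
    intro a b
    have hcard : ({a, b} : Finset (Fin I)).card < Fintype.card (Fin I) := by
      have h1 : ({a, b} : Finset (Fin I)).card ≤ 2 := by
        apply le_trans (Finset.card_insert_le _ _); simp
      simp only [Fintype.card_fin]; omega
    have hne : (({a, b} : Finset (Fin I))ᶜ).Nonempty := by
      rw [← Finset.card_pos, Finset.card_compl]; omega
    obtain ⟨j, hj⟩ := hne
    simp only [Finset.mem_compl, Finset.mem_insert, Finset.mem_singleton, not_or] at hj
    exact ⟨j, hj.1, hj.2⟩
  -- multiplied-out form of the equations
  have heq' : ∀ i j, i ≠ j → α * r i * c j * NT = zr i * zc j := by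
    intro i j hij
    have h := heq i j hij
    field_simp at h
    linarith
  -- cross ratios for rows
  have hrr : ∀ i i', r i * zr i' = zr i * r i' := by
    intro i i'
    by_cases h : i = i'
    · subst h; ring
    obtain ⟨j, hj1, hj2⟩ := third i i'
    have e1 := heq' i j (Ne.symm hj1)
    have e2 := heq' i' j (Ne.symm hj2)
    have hne : α * c j * NT ≠ 0 := by
      have := hcpos j; positivity
    apply mul_left_cancel₀ hne
    linear_combination zr i' * e1 - zr i * e2
  -- cross ratios for columns
  have hcc : ∀ j j', c j * zc j' = zc j * c j' := by
    intro j j'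
    by_cases h : j = j'
    · subst h; ring
    obtain ⟨i, hi1, hi2⟩ := third j j'
    have e1 := heq' i j hi1
    have e2 := heq' i j' hi2
    have hne : α * r i * NT ≠ 0 := by
      have := hrpos i; positivity
    apply mul_left_cancel₀ hne
    linear_combination zc j' * e1 - zc j * e2
  have hSr : 0 < ∑ k, zr k := Finset.sum_pos (fun k _ => hzr k) ⟨⟨0, by omega⟩, Finset.mem_univ _⟩
  have hSc : 0 < ∑ k, zc k := Finset.sum_pos (fun k _ => hzc k) ⟨⟨0, by omega⟩, Finset.mem_univ _⟩
  have hrval : ∀ i, r i = zr i / ∑ k, zr k := by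
    intro i
    have hs : ∑ k, r i * zr k = ∑ k, zr i * r k :=
      Finset.sum_congr rfl fun k _ => hrr i k
    rw [← Finset.mul_sum, ← Finset.mul_sum, hrs, mul_one] at hs
    rw [eq_div_iff hSr.ne']
    exact hs
  have hcval : ∀ j, c j = zc j / ∑ k, zc k := by
    intro j
    have hs : ∑ k, c j * zc k = ∑ k, zc j * c k :=
      Finset.sum_congr rfl fun k _ => hcc j k
    rw [← Finset.mul_sum, ← Finset.mul_sum, hcs, mul_one] at hs
    rw [eq_div_iff hSc.ne']
    exact hs
  refine ⟨hrval, hcval, ?_⟩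
  -- compute α
  obtain ⟨i, hij⟩ := exists_ne (⟨0, by omega⟩ : Fin I)
  have e := heq' i _ hij
  rw [hrval i, hcval _] at e
  have hN : (∑ i, ∑ j, zr i * zc j) = (∑ k, zr k) * (∑ k, zc k) := by
    rw [Finset.sum_mul_sum]
  rw [hN, eq_div_iff hNT.ne']
  have hzi := (hzr i).ne'
  have hzj := (hzc ⟨0, by omega⟩).ne'
  field_simp at e
  nlinarith [e, mul_pos (hzr i) (hzc ⟨0, by omega⟩)]
end

section
/- Let I ≥ 3 and let ζʳ, ζᶜ, ζᵞ ∈ ℝ^I be strictly positive vectors. Set N_T = Σ_{i≠j} ζʳ_i ζᶜ_j + Σ_i ζʳ_i ζᶜ_i ζᵞ_i and N = Σ_{i,j} ζʳ_i ζᶜ_j, and let P = (p_{i,j}) be the I×I matrix with p_{i,j} = ζʳ_i ζᶜ_j / N_T for i ≠ j and p_{i,i} = ζʳ_i ζᶜ_i ζᵞ_i / N_T. If either (i) N_T < N, or (ii) N_T = N and there exists an index i with ζᵞ_i ≠ 1, or (iii) N_T > N and there exists an index i with ζᵞ_i < 1, then P does not belong to the diagonal-effect mixture model M2. -/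
/-- Criteria for a strictly positive table of the diagonal-effect toric model
not to belong to the mixture model `M2`, in terms of the normalizing constants
`N_T` and `N` and the diagonal parameters `ζᵞ`. -/
theorem toric_not_in_M2_criteria {I : ℕ} (hI : 3 ≤ I)
    (zr zc zg : Fin I → ℝ)
    (hzr : ∀ i, 0 < zr i) (hzc : ∀ i, 0 < zc i) (hzg : ∀ i, 0 < zg i)
    (NT N : ℝ)
    (hNT : NT = (∑ i, ∑ j, if i = j then 0 else zr i * zc j) +
                 ∑ i, zr i * zc i * zg i)
    (hN : N = ∑ i, ∑ j, zr i * zc j)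
    (P : Matrix (Fin I) (Fin I) ℝ)
    (hPoff : ∀ i j, i ≠ j → P i j = zr i * zc j / NT)
    (hPdiag : ∀ i, P i i = zr i * zc i * zg i / NT)
    (hcase : NT < N ∨ (NT = N ∧ ∃ i, zg i ≠ 1) ∨ (N < NT ∧ ∃ i, zg i < 1)) :
    ¬ inM2 P := by
  rintro ⟨α, r, c, d, hα0, hα1, hr0, hc0, hd0, hrs, hcs, hds, hMoff, hMdiag⟩
  have hI0 : 0 < I := by omega
  haveI : Nonempty (Fin I) := Fin.pos_iff_nonempty.mp hI0
  have hNTpos : 0 < NT := by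
    rw [hNT]
    have h1 : 0 ≤ ∑ i, ∑ j, if i = j then 0 else zr i * zc j := by
      apply Finset.sum_nonneg; intro i _
      apply Finset.sum_nonneg; intro j _
      split
      · exact le_refl 0
      · exact le_of_lt (mul_pos (hzr i) (hzc j))
    have h2 : 0 < ∑ i, zr i * zc i * zg i :=
      Finset.sum_pos (fun i _ => mul_pos (mul_pos (hzr i) (hzc i)) (hzg i))
        Finset.univ_nonempty
    linarith
  have hNTne : NT ≠ 0 := ne_of_gt hNTpos
  have hex : ∀ j k : Fin I, ∃ i : Fin I, i ≠ j ∧ i ≠ k := by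
    intro j k
    have hcard : ({j, k} : Finset (Fin I)).card ≤ 2 :=
      le_trans (Finset.card_insert_le _ _) (by simp)
    have hne : (({j, k} : Finset (Fin I))ᶜ).Nonempty := by
      rw [← Finset.card_pos, Finset.card_compl]
      simp only [Fintype.card_fin]
      omega
    obtain ⟨i, hi⟩ := hne
    simp only [Finset.mem_compl, Finset.mem_insert, Finset.mem_singleton, not_or] at hi
    exact ⟨i, hi.1, hi.2⟩
  have heq : ∀ i j : Fin I, i ≠ j → α * r i * c j = zr i * zc j / NT :=
    fun i j h => (hMoff i j h).symm.trans (hPoff i j h)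
  set i0 : Fin I := ⟨0, by omega⟩ with hi0
  set j1 : Fin I := ⟨1, by omega⟩ with hj1
  have h01 : i0 ≠ j1 := by
    intro h
    have := congrArg Fin.val h
    simp [hi0, hj1] at this
  have hp01 : 0 < α * r i0 * c j1 := by
    rw [heq i0 j1 h01]
    exact div_pos (mul_pos (hzr i0) (hzc j1)) hNTpos
  have hαpos : 0 < α := by
    nlinarith [hp01, mul_nonneg (hr0 i0) (hc0 j1)]
  have hrpos : ∀ i, 0 < r i := by
    intro i
    obtain ⟨j, hji, -⟩ := hex i i
    have hp : 0 < α * r i * c j := by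
      rw [heq i j (Ne.symm hji)]
      exact div_pos (mul_pos (hzr i) (hzc j)) hNTpos
    nlinarith [hp, mul_nonneg (le_of_lt hαpos) (hc0 j)]
  have hcpos : ∀ j, 0 < c j := by
    intro j
    obtain ⟨i, hij, -⟩ := hex j j
    have hp : 0 < α * r i * c j := by
      rw [heq i j hij]
      exact div_pos (mul_pos (hzr i) (hzc j)) hNTpos
    nlinarith [hp, mul_nonneg (le_of_lt hαpos) (hr0 i)]
  -- proportionality of c to zc
  have hcprop : ∀ j k : Fin I, c j * zc k = c k * zc j := by
    intro j k
    rcases eq_or_ne j k with rfl | hjk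
    · rfl
    · obtain ⟨i, hij, hik⟩ := hex j k
      have h1 := heq i j hij
      have h2 := heq i k hik
      have har : α * r i ≠ 0 := ne_of_gt (mul_pos hαpos (hrpos i))
      apply mul_left_cancel₀ har
      calc α * r i * (c j * zc k) = (α * r i * c j) * zc k := by ring
        _ = (zr i * zc j / NT) * zc k := by rw [h1]
        _ = (zr i * zc k / NT) * zc j := by ring
        _ = (α * r i * c k) * zc j := by rw [h2]
        _ = α * r i * (c k * zc j) := by ring
  -- proportionality of r to zr
  have hrprop : ∀ i l : Fin I, r i * zr l = r l * zr i := by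
    intro i l
    rcases eq_or_ne i l with rfl | hil
    · rfl
    · obtain ⟨j, hji, hjl⟩ := hex i l
      have h1 := heq i j (Ne.symm hji)
      have h2 := heq l j (Ne.symm hjl)
      have hac : α * c j ≠ 0 := ne_of_gt (mul_pos hαpos (hcpos j))
      apply mul_left_cancel₀ hac
      calc α * c j * (r i * zr l) = (α * r i * c j) * zr l := by ring
        _ = (zr i * zc j / NT) * zr l := by rw [h1]
        _ = (zr l * zc j / NT) * zr i := by ring
        _ = (α * r l * c j) * zr i := by rw [h2]
        _ = α * c j * (r l * zr i) := by ring
  set lam := r i0 / zr i0 with hlam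
  set mu := c i0 / zc i0 with hmu
  have hrlam : ∀ i, r i = lam * zr i := by
    intro i
    rw [hlam, div_mul_eq_mul_div, eq_div_iff (ne_of_gt (hzr i0))]
    exact hrprop i i0
  have hcmu : ∀ j, c j = mu * zc j := by
    intro j
    rw [hmu, div_mul_eq_mul_div, eq_div_iff (ne_of_gt (hzc i0))]
    exact hcprop j i0
  have hSr : 0 < ∑ i, zr i := Finset.sum_pos (fun i _ => hzr i) Finset.univ_nonempty
  have hSc : 0 < ∑ i, zc i := Finset.sum_pos (fun i _ => hzc i) Finset.univ_nonempty
  have hlamS : lam * (∑ i, zr i) = 1 := by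
    have h : ∑ i, r i = lam * ∑ i, zr i := by
      rw [Finset.mul_sum]
      exact Finset.sum_congr rfl (fun i _ => hrlam i)
    linarith [hrs, h]
  have hmuS : mu * (∑ i, zc i) = 1 := by
    have h : ∑ i, c i = mu * ∑ i, zc i := by
      rw [Finset.mul_sum]
      exact Finset.sum_congr rfl (fun i _ => hcmu i)
    linarith [hcs, h]
  have hkey := heq i0 j1 h01
  rw [hrlam i0, hcmu j1, eq_div_iff hNTne] at hkey
  -- hkey : α * (lam * zr i0) * (mu * zc j1) * NT = zr i0 * zc j1  (modulo exact shape)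
  have h' : α * lam * mu * NT = 1 := by
    have hz : zr i0 * zc j1 ≠ 0 := ne_of_gt (mul_pos (hzr i0) (hzc j1))
    apply mul_right_cancel₀ hz
    linear_combination hkey
  have hN' : N = (∑ i, zr i) * (∑ i, zc i) := by
    rw [hN, Finset.sum_mul_sum]
  have hαNT : α * NT = N := by
    rw [hN']
    linear_combination (∑ i, zr i) * (∑ i, zc i) * h' - α * NT * hlamS
      - α * NT * lam * (∑ i, zr i) * hmuS
  have hdiag : ∀ i, (1 - α) * d i * NT = zr i * zc i * (zg i - 1) := by
    intro i
    have h2 := hMdiag i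
    rw [hrlam i, hcmu i, hPdiag i, div_eq_iff hNTne] at h2
    linear_combination -h2 - zr i * zc i * h'
  rcases hcase with hlt | ⟨heqN, i, hgi⟩ | ⟨hgt, i, hgi⟩
  · nlinarith [hαNT, hα1, hNTpos, hlt]
  · have hα : α = 1 := by
      have h := hαNT
      rw [← heqN] at h
      exact mul_right_cancel₀ hNTne (h.trans (one_mul NT).symm)
    have h0 : zr i * zc i * (zg i - 1) = 0 := by
      have hd := hdiag i
      rw [hα] at hd
      linarith [hd]
    rcases mul_eq_zero.mp h0 with h | h
    · exact absurd h (ne_of_gt (mul_pos (hzr i) (hzc i)))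
    · exact hgi (by linarith)
  · have hαlt : α < 1 := by nlinarith [hαNT, hNTpos, hgt]
    have hd := hdiag i
    have h1 : 0 ≤ (1 - α) * d i := mul_nonneg (by linarith) (hd0 i)
    have h2 : zr i * zc i * (zg i - 1) < 0 :=
      mul_neg_of_pos_of_neg (mul_pos (hzr i) (hzc i)) (by linarith)
    linarith [hd, h2, mul_nonneg h1 (le_of_lt hNTpos)]
end

section
/- Let ζʳ, ζᶜ, ζᵞ ∈ ℝ^I be nonnegative vectors, let f = (f_{i,j}) be an I×I table of natural numbers, and define the row totals f_{i,+} = Σ_j f_{i,j} and column totals f_{+,j} = Σ_i f_{i,j}. Define p_{i,j} = ζʳ_i ζᶜ_j for i ≠ j and p_{i,i} = ζʳ_i ζᶜ_i ζᵞ_i. Then ∏_{i,j} p_{i,j}^{f_{i,j}} = ∏_i (ζʳ_i)^{f_{i,+}} · ∏_j (ζᶜ_j)^{f_{+,j}} · ∏_i (ζᵞ_i)^{f_{i,i}}. (The likelihood of the diagonal-effect toric model depends on the data only through the marginal totals and the diagonal counts.) -/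
/-- The likelihood of the diagonal-effect toric model depends on the data only through
the marginal totals and the diagonal counts. -/
theorem toric_model_sufficient_statistic {I : ℕ}
    (zr zc zg : Fin I → ℝ)
    (hzr : ∀ i, 0 ≤ zr i) (hzc : ∀ i, 0 ≤ zc i) (hzg : ∀ i, 0 ≤ zg i)
    (f : Fin I → Fin I → ℕ)
    (p : Fin I → Fin I → ℝ)
    (hpoff : ∀ i j, i ≠ j → p i j = zr i * zc j)
    (hpdiag : ∀ i, p i i = zr i * zc i * zg i) :
    ∏ i, ∏ j, p i j ^ f i j =
      (∏ i, zr i ^ (∑ j, f i j)) * (∏ j, zc j ^ (∑ i, f i j)) *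
        ∏ i, zg i ^ f i i := by
  have hp : ∀ i j, p i j = zr i * zc j * (if i = j then zg i else 1) := by
    intro i j
    by_cases h : i = j
    · subst h; simp [hpdiag i]
    · simp [h, hpoff i j h]
  calc ∏ i, ∏ j, p i j ^ f i j
      = ∏ i, ∏ j, (zr i ^ f i j * zc j ^ f i j *
          (if i = j then zg i else 1) ^ f i j) := by
        simp only [hp, mul_pow]
    _ = (∏ i, ∏ j, zr i ^ f i j) * (∏ i, ∏ j, zc j ^ f i j) *
          (∏ i, ∏ j, (if i = j then zg i else 1) ^ f i j) := by
        simp only [Finset.prod_mul_distrib]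
    _ = (∏ i, zr i ^ (∑ j, f i j)) * (∏ j, zc j ^ (∑ i, f i j)) *
          ∏ i, zg i ^ f i i := by
        congr 1
        · congr 1
          · exact Finset.prod_congr rfl fun i _ => Finset.prod_pow_eq_pow_sum _ _ _
          · rw [Finset.prod_comm]
            exact Finset.prod_congr rfl fun j _ => Finset.prod_pow_eq_pow_sum _ _ _
        · refine Finset.prod_congr rfl fun i _ => ?_
          rw [Finset.prod_eq_single i]
          · simp
          · intro j _ hj
            simp [Ne.symm hj]
          · simp
end

section
/- Let P = (p_{i,j}) belong to the common-diagonal-effect mixture model. Let (i,j) and (k,l) be two distinct pairs of indices in {1,…,I} with i ≠ j and k ≠ l, and let m ∈ {1,…,I} \ {i,j} and n ∈ {1,…,I} \ {k,l} with m ≠ n. Then f_{ijklmn} := p_{i,j} p_{k,l} p_{n,n} − p_{i,j} p_{n,l} p_{k,n} − p_{i,j} p_{k,l} p_{m,m} + p_{k,l} p_{m,j} p_{i,m} = 0. -/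
/-- The common-diagonal-effect mixture model: matrices with
`p i j = α * r i * c j` off the diagonal and `p i i = α * r i * c i + (1 - α)/I`,
where `r, c` are nonnegative vectors summing to `1` and `α ∈ [0,1]`. -/
def inCM2 {I : ℕ} (P : Matrix (Fin I) (Fin I) ℝ) : Prop :=
  ∃ (α : ℝ) (r c : Fin I → ℝ),
    0 ≤ α ∧ α ≤ 1 ∧
    (∀ i, 0 ≤ r i) ∧ (∀ i, 0 ≤ c i) ∧
    (∑ i, r i = 1) ∧ (∑ i, c i = 1) ∧
    (∀ i j, i ≠ j → P i j = α * r i * c j) ∧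
    (∀ i, P i i = α * r i * c i + (1 - α) / I)

/-- Invariants `f_{ijklmn}` of the common-diagonal-effect mixture model. -/
theorem commonDiag_mixture_f_invariant {I : ℕ}
    (P : Matrix (Fin I) (Fin I) ℝ) (hP : inCM2 P)
    (i j k l m n : Fin I)
    (hij : i ≠ j) (hkl : k ≠ l) (hpairs : (i, j) ≠ (k, l))
    (hmi : m ≠ i) (hmj : m ≠ j) (hnk : n ≠ k) (hnl : n ≠ l) (hmn : m ≠ n) :
    P i j * P k l * P n n - P i j * P n l * P k n
      - P i j * P k l * P m m + P k l * P m j * P i m = 0 := by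
  obtain ⟨α, r, c, -, -, -, -, -, -, hoff, hdiag⟩ := hP
  rw [hoff i j hij, hoff k l hkl, hdiag n, hoff n l hnl, hoff k n (Ne.symm hnk),
    hdiag m, hoff m j hmj, hoff i m (Ne.symm hmi)]
  ring
end

section
/- Let P = (p_{i,j}) belong to the common-diagonal-effect mixture model. Let i ≠ j be two indices in {1,…,I} and let k ∈ {1,…,I} \ {i,j}. Then g_{ijk} := p_{i,j} p_{i,i} p_{k,k} + p_{i,j} p_{j,j} p_{k,k} − p_{i,j} p_{i,i} p_{j,j} − p_{i,j} p_{k,k}² + p_{k,k} p_{i,k} p_{k,j} − p_{i,i} p_{i,k} p_{k,j} + p_{i,j}² p_{j,i} − p_{i,j} p_{k,j} p_{j,k} = 0. -/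
/-- Invariants `g_{ijk}` of the common-diagonal-effect mixture model. -/
theorem commonDiag_mixture_g_invariant {I : ℕ}
    (P : Matrix (Fin I) (Fin I) ℝ) (hP : inCM2 P)
    (i j k : Fin I) (hij : i ≠ j) (hki : k ≠ i) (hkj : k ≠ j) :
    P i j * P i i * P k k + P i j * P j j * P k k
      - P i j * P i i * P j j - P i j * P k k ^ 2
      + P k k * P i k * P k j - P i i * P i k * P k j
      + P i j ^ 2 * P j i - P i j * P k j * P j k = 0 := by
  obtain ⟨α, r, c, -, -, -, -, -, -, hoff, hdiag⟩ := hP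
  rw [hoff i j hij, hoff i k (Ne.symm hki), hoff k j hkj, hoff j i hij.symm,
    hoff j k (Ne.symm hkj), hdiag i, hdiag j, hdiag k]
  ring
end
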